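/- Continuous embedding of the Banach space of perturbations into the Hilbert space (the inclusion B ⊂ H): For every β < −1 and ρ₀ > 0 there is a constant c > 0, depending only on β and ρ₀, such that every perturbation φ = (v̄, λ̄', Ȳ) with finite norm ‖φ‖_B satisfies ‖φ‖_H ≤ c ‖φ‖_B; in particular B ⊂ H. -/

import Mathlib

/- Formalization preamble for:
   "Small deformations of extreme five-dimensional vacuum black hole initial data"
   Work on ℝ³ (Euclidean); cylindrical radius ρ(x)=√(x₀²+x₁²), axis coordinate z = x₂.
   The measure dΣ = ρ dρ dz dφ is Lebesgue measure on ℝ³. -/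

open MeasureTheory Real
open scoped RealInnerProductSpace BigOperators

noncomputable section

namespace BHMass

/-- ℝ³ as a Euclidean space. -/
abbrev E3 : Type := EuclideanSpace ℝ (Fin 3)

/-- Cylindrical radius ρ. -/
def cylRho (x : E3) : ℝ := Real.sqrt ((x 0) ^ 2 + (x 1) ^ 2)

/-- The solid cylinder K_{ρ₀} = {ρ ≤ ρ₀}. -/
def Kcyl (ρ₀ : ℝ) : Set E3 := {x | cylRho x ≤ ρ₀}

/-- Ω_{ρ₀} = ℝ³ ∖ K_{ρ₀}. -/
def Omg (ρ₀ : ℝ) : Set E3 := {x | ρ₀ < cylRho x}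

/-- σ = √(r² + 1). -/
def sigmaW (x : E3) : ℝ := Real.sqrt (‖x‖ ^ 2 + 1)

/-- Flat gradient on ℝ³. -/
def grad (f : E3 → ℝ) : E3 → E3 := gradient f

/-- Flat Laplacian Δ₃. -/
def lap (f : E3 → ℝ) (x : E3) : ℝ :=
  ∑ i : Fin 3, iteratedFDeriv ℝ 2 f x ![EuclideanSpace.single i 1, EuclideanSpace.single i 1]

/-- Flat divergence ∇· of a vector field. -/
def divg (V : E3 → E3) (x : E3) : ℝ :=
  ∑ i : Fin 3, fderiv ℝ (fun y => V y i) x (EuclideanSpace.single i 1)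

/-- A scalar field is axisymmetric if it depends only on (ρ, z). -/
def Axisym (f : E3 → ℝ) : Prop :=
  ∀ x y : E3, cylRho x = cylRho y → x 2 = y 2 → f x = f y

abbrev Mat2 : Type := Matrix (Fin 2) (Fin 2) ℝ

/-- ∇Yᵗ A ∇Z = Σᵢⱼ Aᵢⱼ ⟪∇Yᵢ, ∇Zⱼ⟫ (gradients contracted with the flat metric). -/
def quadG (A : Mat2) (Y Z : E3 → Fin 2 → ℝ) (x : E3) : ℝ :=
  ∑ i, ∑ j, A i j * ⟪grad (fun y => Y y i) x, grad (fun y => Z y j) x⟫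

/-- aᵗ A b for 2-vectors. -/
def vecQuad (A : Mat2) (a b : Fin 2 → ℝ) : ℝ := ∑ i, ∑ j, a i * A i j * b j

/-- det(∇L) = ∇L₁₁·∇L₂₂ − ∇L₁₂·∇L₁₂. -/
def gradDet (L : E3 → Mat2) (x : E3) : ℝ :=
  ⟪grad (fun y => L y 0 0) x, grad (fun y => L y 1 1) x⟫ -
    ⟪grad (fun y => L y 0 1) x, grad (fun y => L y 0 1) x⟫

/-- A data (or perturbation) triple u = (v, λ', Y). -/
structure Data where
  v : E3 → ℝ
  L : E3 → Mat2
  Y : E3 → Fin 2 → ℝ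

/-- The zero triple. -/
def zeroData : Data := ⟨fun _ => 0, fun _ => 0, fun _ => 0⟩

/-- All components smooth. -/
def SmoothData (u : Data) : Prop :=
  ContDiff ℝ (⊤ : ℕ∞) u.v ∧ (∀ i j, ContDiff ℝ (⊤ : ℕ∞) fun x => u.L x i j) ∧
    ∀ i, ContDiff ℝ (⊤ : ℕ∞) fun x => u.Y x i

/-- All components axisymmetric. -/
def AxisymData (u : Data) : Prop :=
  Axisym u.v ∧ (∀ i j, Axisym fun x => u.L x i j) ∧ ∀ i, Axisym fun x => u.Y x i

/-- λ = e^{2v} λ'. -/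
def lamD (u : Data) (x : E3) : Mat2 := Real.exp (2 * u.v x) • u.L x

/-- X = det λ = e^{4v} ρ². -/
def XD (u : Data) (x : E3) : ℝ := Real.exp (4 * u.v x) * cylRho x ^ 2

/-- u + t·φ. -/
def addS (u φ : Data) (t : ℝ) : Data :=
  ⟨fun x => u.v x + t * φ.v x, fun x => u.L x + t • φ.L x, fun x => u.Y x + t • φ.Y x⟩

/-- The expression σ^{-β} |f| + σ^{-β+1} |∇f| appearing in the C¹_β norm,
    for given pointwise magnitudes m = |f| and dm = |∇f|. -/
def c1Expr (β : ℝ) (m dm : E3 → ℝ) (x : E3) : ℝ :=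
  sigmaW x ^ (-β) * m x + sigmaW x ^ (-β + 1) * dm x

/-- The weighted C¹_β norm over Ω. -/
def c1Norm (β : ℝ) (Ω : Set E3) (m dm : E3 → ℝ) : ℝ := ⨆ x ∈ Ω, c1Expr β m dm x

/-- Finiteness of the C¹_β norm over Ω. -/
def c1Fin (β : ℝ) (Ω : Set E3) (m dm : E3 → ℝ) : Prop := BddAbove (c1Expr β m dm '' Ω)

/-- |M|² = Tr(MᵗM). -/
def matAbsSq (M : Mat2) : ℝ := ∑ i, ∑ j, (M i j) ^ 2

/-- |∇L|² (sum over entries of |∇L_{ij}|²). -/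
def gradMatAbsSq (L : E3 → Mat2) (x : E3) : ℝ := ∑ i, ∑ j, ‖grad (fun y => L y i j) x‖ ^ 2

/-- The Banach norm ‖φ‖_B = ‖v̄‖_{C¹_β(ℝ³)} + ‖λ̄'‖_{C¹_β(Ω_{ρ₀})} + ‖Ȳ‖_{C¹_β(Ω_{ρ₀})},
    where |Ȳ| = (Ȳᵗ λ'₀⁻¹ Ȳ)^{1/2}, |∇Ȳ| = (∇Ȳᵗ λ'₀⁻¹ ∇Ȳ)^{1/2}. -/
def BNorm (β ρ₀ : ℝ) (L0 : E3 → Mat2) (φ : Data) : ℝ :=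
  c1Norm β Set.univ (fun x => |φ.v x|) (fun x => ‖grad φ.v x‖)
  + c1Norm β (Omg ρ₀) (fun x => Real.sqrt (matAbsSq (φ.L x)))
      (fun x => Real.sqrt (gradMatAbsSq φ.L x))
  + c1Norm β (Omg ρ₀) (fun x => Real.sqrt (vecQuad (L0 x)⁻¹ (φ.Y x) (φ.Y x)))
      (fun x => Real.sqrt (quadG (L0 x)⁻¹ φ.Y φ.Y x))

/-- Finiteness of ‖φ‖_B. -/
def FiniteB (β ρ₀ : ℝ) (L0 : E3 → Mat2) (φ : Data) : Prop :=
  c1Fin β Set.univ (fun x => |φ.v x|) (fun x => ‖grad φ.v x‖) ∧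
  c1Fin β (Omg ρ₀) (fun x => Real.sqrt (matAbsSq (φ.L x)))
      (fun x => Real.sqrt (gradMatAbsSq φ.L x)) ∧
  c1Fin β (Omg ρ₀) (fun x => Real.sqrt (vecQuad (L0 x)⁻¹ (φ.Y x) (φ.Y x)))
      (fun x => Real.sqrt (quadG (L0 x)⁻¹ φ.Y φ.Y x))

/-- Perturbation triple: smooth, axisymmetric, λ̄' and Ȳ vanishing on K_{ρ₀},
    λ̄' symmetric with det λ̄' = 0 and Tr(adj(λ'₀) λ̄') = 0. -/
def IsPert (ρ₀ : ℝ) (L0 : E3 → Mat2) (φ : Data) : Prop :=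
  SmoothData φ ∧ AxisymData φ ∧
  (∀ x, cylRho x ≤ ρ₀ → φ.L x = 0 ∧ φ.Y x = 0) ∧
  (∀ x, (φ.L x).IsSymm) ∧
  (∀ x, (φ.L x).det = 0) ∧
  (∀ x, ((L0 x).adjugate * φ.L x).trace = 0)

/-- Membership in the Banach space B. -/
def InB (β ρ₀ : ℝ) (L0 : E3 → Mat2) (φ : Data) : Prop :=
  IsPert ρ₀ L0 φ ∧ FiniteB β ρ₀ L0 φ

/-- The Hilbert norm squared ‖φ‖²_H = ‖v̄‖²_{H₁} + ‖λ̄'‖²_{H₂} + ‖Ȳ‖²_{H₃}. -/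
def HNormSq (ρ₀ : ℝ) (L0 : E3 → Mat2) (φ : Data) : ℝ :=
  (∫ x : E3, (‖grad φ.v x‖ ^ 2 / ‖x‖ ^ 2 + (φ.v x) ^ 2 / ‖x‖ ^ 4)) +
  (∫ x in Omg ρ₀, (gradMatAbsSq φ.L x / cylRho x ^ 2 + matAbsSq (φ.L x) / cylRho x ^ 4)) +
  (∫ x in Omg ρ₀, (quadG (L0 x)⁻¹ φ.Y φ.Y x / cylRho x ^ 2
      + vecQuad (L0 x)⁻¹ (φ.Y x) (φ.Y x) / cylRho x ^ 4))

/-- Bulk integrand of the mass functional. -/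
def massIntegrand (u : Data) (x : E3) : ℝ :=
  -gradDet u.L x / (2 * cylRho x ^ 2)
  + Real.exp (-(6 : ℝ) * u.v x) * quadG (u.L x)⁻¹ u.Y u.Y x / (2 * cylRho x ^ 2)
  + 6 * ‖grad u.v x‖ ^ 2

/-- The mass functional 𝓜, with rod boundary term R. -/
def massFun (R : (E3 → Mat2) → ℝ) (u : Data) : ℝ :=
  (1 / 8) * (∫ x : E3, massIntegrand u x) + R u.L

/-- The rod term depends only on λ' on the cylinder K_{ρ₀} (a neighbourhood of the
    axis), hence is unchanged by perturbations vanishing on K_{ρ₀}. -/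
def RodLocal (ρ₀ : ℝ) (R : (E3 → Mat2) → ℝ) : Prop :=
  ∀ L L' : E3 → Mat2, (∀ x, cylRho x ≤ ρ₀ → L x = L' x) → R L = R L'

/-- First stationary (Euler–Lagrange) equation: 4Δ₃v + X⁻¹ ∇Yᵗ λ⁻¹ ∇Y = 0. -/
def EL1 (u : Data) (x : E3) : Prop :=
  4 * lap u.v x + quadG (lamD u x)⁻¹ u.Y u.Y x / XD u x = 0

/-- Second stationary equation: ∇·(ρ⁻² ∇λ') + X⁻² e^{2v} ∇Y ∇Yᵗ = 0. -/
def EL2 (u : Data) (x : E3) : Prop :=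
  ∀ i j, divg (fun y => (cylRho y ^ 2)⁻¹ • grad (fun z => u.L z i j) y) x
    + Real.exp (2 * u.v x) / XD u x ^ 2 *
        ⟪grad (fun y => u.Y y i) x, grad (fun y => u.Y y j) x⟫ = 0

/-- Third stationary equation: ∇·(X⁻¹ λ⁻¹ ∇Y) = 0. -/
def EL3 (u : Data) (x : E3) : Prop :=
  ∀ i, divg (fun y => (XD u y)⁻¹ • ∑ j, ((lamD u y)⁻¹ i j) • grad (fun z => u.Y z j) y) x = 0

/-- |∇λ λ⁻¹|² (entrywise, gradients contracted with the flat metric). -/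
def gradLamLamInvSq (u : Data) (x : E3) : ℝ :=
  ∑ i, ∑ j, ‖∑ k, ((lamD u x)⁻¹ k j) • grad (fun y => lamD u y i k) x‖ ^ 2

/-- The bounds defining the extreme class (Definition 1, items 1–4); all pointwise
    bounds are imposed on the region ρ ≤ r². -/
def ExtremeBounds (ρ₀ : ℝ) (u : Data) : Prop :=
  ∃ C C₁ C₂ C₃ C₄ C' : ℝ, 0 < C ∧ 0 < C₁ ∧ 0 < C₂ ∧ 0 < C₃ ∧ 0 < C₄ ∧ 0 < C' ∧
    (∀ x : E3, 0 < cylRho x → cylRho x ≤ ‖x‖ ^ 2 →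
      quadG (lamD u x)⁻¹ u.Y u.Y x / XD u x ≤ C / ‖x‖ ^ 4 ∧
      Real.exp (-(2 : ℝ) * u.v x) * quadG (lamD u x)⁻¹ u.Y u.Y x / XD u x ≤ C / ‖x‖ ^ 2 ∧
      cylRho x ^ 2 ≤ XD u x ∧
      ‖grad u.v x‖ ^ 2 ≤ C / ‖x‖ ^ 4 ∧
      ‖grad (fun y => Real.log (XD u y)) x‖ ^ 2 ≤ C / cylRho x ^ 2) ∧
    (∀ x ∈ Omg ρ₀, cylRho x ≤ ‖x‖ ^ 2 →
      (lamD u x - (C₁ * cylRho x) • (1 : Mat2)).PosSemidef ∧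
      ((C₂ * cylRho x) • (1 : Mat2) - lamD u x).PosSemidef ∧
      ((lamD u x)⁻¹ - (C₃ / cylRho x) • (1 : Mat2)).PosSemidef ∧
      ((C₄ / cylRho x) • (1 : Mat2) - (lamD u x)⁻¹).PosSemidef ∧
      XD u x ^ 2 ≤ C' * cylRho x ^ 4 ∧
      gradLamLamInvSq u x ≤ C / cylRho x ^ 2)

/-- The potential X_t⁻¹ Ȳᵗ λ_t⁻¹ Ȳ + 16 v̄² whose Laplacian carries the boundary
    term in the integrated Carter identity. -/
def carterPot (u φ : Data) (t : ℝ) (y : E3) : ℝ :=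
  vecQuad (lamD (addS u φ t) y)⁻¹ (φ.Y y) (φ.Y y) / XD (addS u φ t) y + 16 * (φ.v y) ^ 2

/-- Rendering of condition (ii) of the extreme class: the decay and boundary
    conditions make all boundary terms arising in integration by parts against
    perturbations in B vanish (the total divergences integrate to zero). -/
def NoBoundaryTerms (β ρ₀ : ℝ) (u : Data) : Prop :=
  ∀ φ : Data, InB β ρ₀ u.L φ → ∀ t ∈ Set.Ico (0 : ℝ) 1,
    (∫ x : E3, lap (carterPot u φ t) x) = 0

/-- The extreme class E (Definition 1): smooth axisymmetric data with symmetric,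
    positive-definite λ'₀, det λ'₀ = ρ², satisfying the stationary field
    equations, the boundary conditions, and the extreme bounds. -/
def IsExtremeData (β ρ₀ : ℝ) (u : Data) : Prop :=
  SmoothData u ∧ AxisymData u ∧
  (∀ x, (u.L x).IsSymm) ∧
  (∀ x, (u.L x).det = cylRho x ^ 2) ∧
  (∀ x, 0 < cylRho x → (u.L x).PosDef) ∧
  (∀ x, 0 < cylRho x → EL1 u x ∧ EL2 u x ∧ EL3 u x) ∧
  NoBoundaryTerms β ρ₀ u ∧
  ExtremeBounds ρ₀ u

/-- Integrand of the second variation E''_φ(t). -/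
def svIntegrand (u φ : Data) (t : ℝ) (x : E3) : ℝ :=
  let w := addS u φ t
  12 * ‖grad φ.v x‖ ^ 2 - gradDet φ.L x / cylRho x ^ 2
  + Real.exp (-(6 : ℝ) * w.v x) / cylRho x ^ 4 *
      (2 * quadG (φ.L x).adjugate w.Y φ.Y x
        + quadG (w.L x).adjugate φ.Y φ.Y x
        - 6 * φ.v x * quadG (φ.L x).adjugate w.Y w.Y x
        - 12 * φ.v x * quadG (w.L x).adjugate w.Y φ.Y x
        + 18 * (φ.v x) ^ 2 * quadG (w.L x).adjugate w.Y w.Y x)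

/-- The second variation E''_φ(t). -/
def secondVar (u φ : Data) (t : ℝ) : ℝ := (1 / 8) * ∫ x : E3, svIntegrand u φ t x

/-- λ̄ = 2 v̄ λ + λ λ'⁻¹ λ̄'. -/
def lamBar (w φ : Data) (x : E3) : Mat2 :=
  (2 * φ.v x) • lamD w x + lamD w x * (w.L x)⁻¹ * φ.L x

/-- U₁ = X⁻¹ λ⁻¹ Ȳ. -/
def U1f (w φ : Data) (y : E3) : Fin 2 → ℝ := fun i =>
  (XD w y)⁻¹ * ∑ j, (lamD w y)⁻¹ i j * φ.Y y j

/-- U₂ = X⁻¹ λ⁻¹ ∇Y. -/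
def U2f (w : Data) (x : E3) (i : Fin 2) : E3 :=
  (XD w x)⁻¹ • ∑ j, ((lamD w x)⁻¹ i j) • grad (fun y => w.Y y j) x

/-- δU₂ = X⁻¹ λ⁻¹ ∇Ȳ − X⁻¹ λ⁻¹ λ̄ λ⁻¹ ∇Y − 4 v̄ U₂. -/
def dU2 (w φ : Data) (x : E3) (i : Fin 2) : E3 :=
  (XD w x)⁻¹ • ∑ j, ((lamD w x)⁻¹ i j) • grad (fun y => φ.Y y j) x
  - (XD w x)⁻¹ •
      ∑ j, (((lamD w x)⁻¹ * lamBar w φ x * (lamD w x)⁻¹) i j) • grad (fun y => w.Y y j) x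
  - (4 * φ.v x) • U2f w x i

/-- The matrix field ∇(λ̄ λ⁻¹) + X⁻¹ ∇Y Ȳᵗ λ⁻¹ (entries are vectors). -/
def MmatF (w φ : Data) (x : E3) (i j : Fin 2) : E3 :=
  grad (fun y => (lamBar w φ y * (lamD w y)⁻¹) i j) x
  + ((XD w x)⁻¹ * ∑ k, φ.Y x k * (lamD w x)⁻¹ k j) • grad (fun y => w.Y y i) x

/-- The manifestly nonnegative right-hand side F of the five-dimensional
    Carter identity. -/
def Fquant (w φ : Data) (x : E3) : ℝ :=
  ‖(4 : ℝ) • grad φ.v x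
      + (XD w x)⁻¹ • ∑ i, ∑ j, (φ.Y x i * (lamD w x)⁻¹ i j) • grad (fun y => w.Y y j) x‖ ^ 2
  + XD w x * ((∑ i, ∑ j, lamD w x i j * ⟪dU2 w φ x i, dU2 w φ x j⟫)
      + ∑ i, ∑ j, lamD w x i j *
          ⟪grad (fun y => U1f w φ y i) x, grad (fun y => U1f w φ y j) x⟫)
  + ∑ i, ∑ j, ⟪MmatF w φ x i j, MmatF w φ x j i⟫

/-- G_X = 4Δ₃v + X⁻¹ ∇Yᵗ λ⁻¹ ∇Y. -/
def GX (w : Data) (x : E3) : ℝ := 4 * lap w.v x + quadG (lamD w x)⁻¹ w.Y w.Y x / XD w x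

/-- G_λ = ∇·(λ⁻¹∇λ) + X⁻¹ λ⁻¹ ∇Y·∇Yᵗ. -/
def Glam (w : Data) (x : E3) : Mat2 := Matrix.of fun i j =>
  divg (fun y => ∑ k, ((lamD w y)⁻¹ i k) • grad (fun z => lamD w z k j) y) x
  + (XD w x)⁻¹ * ∑ k, (lamD w x)⁻¹ i k *
      ⟪grad (fun y => w.Y y k) x, grad (fun y => w.Y y j) x⟫

/-- G_Y = ∇·(X⁻¹ λ⁻¹ ∇Y). -/
def GYv (w : Data) (x : E3) : Fin 2 → ℝ := fun i =>
  divg (fun y => (XD w y)⁻¹ • ∑ j, ((lamD w y)⁻¹ i j) • grad (fun z => w.Y z j) y) x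

/-- Linearized operator Ġ_X at data w in direction φ. -/
def GXdot (w φ : Data) (x : E3) : ℝ :=
  4 * lap φ.v x + Real.exp (-(6 : ℝ) * w.v x) / cylRho x ^ 4 *
    (2 * quadG (w.L x).adjugate φ.Y w.Y x
      + quadG (φ.L x).adjugate w.Y w.Y x
      - 6 * φ.v x * quadG (w.L x).adjugate w.Y w.Y x)

/-- δ(λ'⁻¹ ∇λ') = λ'⁻¹ ∇λ̄' − λ'⁻¹ λ̄' λ'⁻¹ ∇λ' (first variation of λ'⁻¹∇λ'). -/
def deltaLinvGradL (w φ : Data) (y : E3) (i j : Fin 2) : E3 :=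
  ∑ k, ((w.L y)⁻¹ i k) • grad (fun z => φ.L z k j) y
  - ∑ k, (((w.L y)⁻¹ * φ.L y * (w.L y)⁻¹) i k) • grad (fun z => w.L z k j) y

/-- Linearized operator Ġ_λ at data w in direction φ. -/
def Gldot (w φ : Data) (x : E3) : Mat2 := Matrix.of fun i j =>
  2 * lap φ.v x * ((1 : Mat2) i j)
  + divg (fun y => deltaLinvGradL w φ y i j) x
  + Real.exp (-(6 : ℝ) * w.v x) / cylRho x ^ 4 *
      (2 * ∑ k, (w.L x).adjugate i k *
          ⟪grad (fun y => w.Y y k) x, grad (fun y => φ.Y y j) x⟫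
        + ∑ k, (φ.L x).adjugate i k *
            ⟪grad (fun y => w.Y y k) x, grad (fun y => w.Y y j) x⟫
        - 6 * φ.v x * ∑ k, (w.L x).adjugate i k *
            ⟪grad (fun y => w.Y y k) x, grad (fun y => w.Y y j) x⟫)

/-- Linearized operator Ġ_Y at data w in direction φ. -/
def GYdot (w φ : Data) (x : E3) : Fin 2 → ℝ := fun i =>
  divg (fun y => (Real.exp (-(6 : ℝ) * w.v y) / cylRho y ^ 4) •
      (∑ j, ((w.L y).adjugate i j) • grad (fun z => φ.Y z j) y
        + ∑ j, ((φ.L y).adjugate i j) • grad (fun z => w.Y z j) y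
        - (6 * φ.v y) • ∑ j, ((w.L y).adjugate i j) • grad (fun z => w.Y z j) y)) x


/-!
The `C¹_β` bounds give `|f| ≤ ‖φ‖_B σ^β` and `|∇f| ≤ ‖φ‖_B σ^(β-1)` for each component, so every
`H`-integrand is bounded by `‖φ‖_B²` times a fixed weight, and it remains to see that the weights
are integrable. On `Ω_{ρ₀}` we have `ρ⁻² ≤ (1 + ρ₀⁻²)/(1 + ρ²)`, and `(1 + r²)^β / (1 + ρ²)` is
dominated by a product `∏ (1 + xᵢ²)^eᵢ` of integrable one-dimensional factors. For `v̄` the same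
weight handles `r ≥ 1`; near the origin, `v̄(0) = 0` and the mean value theorem give
`|v̄| ≤ ‖φ‖_B r`, which leaves the integrable singularity `r⁻²`. If `v̄(0) ≠ 0`, the `H₁`-integrand
behaves like `r⁻⁴` at the origin, so it is not integrable and its Bochner integral is `0`.
-/

open Metric

theorem integrableOn_ball_inv_norm_pow_iff {E : Type*} [NormedAddCommGroup E]
    [NormedSpace ℝ E] [FiniteDimensional ℝ E] [MeasurableSpace E] [BorelSpace E] [Nontrivial E]
    (μ : Measure E) [μ.IsAddHaarMeasure] {r : ℝ} (hr : 0 < r) (n : ℕ) :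
    IntegrableOn (fun x : E => (‖x‖ ^ n)⁻¹) (ball 0 r) μ ↔ n < Module.finrank ℝ E := by
  have hd : 0 < Module.finrank ℝ E := Module.finrank_pos
  rw [integrableOn_fun_norm_addHaar μ (f := fun t => (t ^ n)⁻¹),
    ← integrableOn_congr_fun (f := fun t : ℝ => t ^ ((Module.finrank ℝ E : ℝ) - 1 - n))
      (fun t ht => ?_) measurableSet_Ioo, intervalIntegral.integrableOn_Ioo_rpow_iff hr]
  · rw [← Nat.cast_lt (α := ℝ)]
    constructor <;> intro h <;> linarith
  · show t ^ _ = _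
    rw [smul_eq_mul, Real.rpow_sub ht.1, Real.rpow_natCast, div_eq_mul_inv,
      ← Nat.cast_one, ← Nat.cast_sub hd, Real.rpow_natCast]

theorem integrable_prod_one_add_sq_rpow {ι : Type*} [Fintype ι] {e : ι → ℝ}
    (he : ∀ i, 2 * e i < -1) :
    Integrable (fun x : EuclideanSpace ℝ ι => ∏ i, (1 + x i ^ 2) ^ e i) := by
  rw [← (PiLp.volume_preserving_toLp ι).integrable_comp_emb
    (MeasurableEquiv.toLp 2 _).measurableEmbedding]
  refine Integrable.fintype_prod (f := fun i (t : ℝ) => (1 + t ^ 2) ^ e i) fun i => ?_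
  have h := integrable_rpow_neg_one_add_norm_sq (E := ℝ) (μ := volume) (r := -(2 * e i))
    (by rw [Module.finrank_self]; push_cast; linarith [he i])
  simpa [Real.norm_eq_abs, sq_abs, show -(-(2 * e i)) / 2 = e i by ring] using h

theorem sq_le_sq_mul_rpow_of_rpow_neg_mul_le {s a N γ : ℝ} (hs : 0 < s) (ha : 0 ≤ a)
    (h : s ^ (-γ) * a ≤ N) : a ^ 2 ≤ N ^ 2 * (s ^ 2) ^ γ := by
  have ha' : a ≤ s ^ γ * N :=
    calc a = s ^ γ * (s ^ (-γ) * a) := by rw [← mul_assoc, ← Real.rpow_add hs]; simp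
      _ ≤ s ^ γ * N := mul_le_mul_of_nonneg_left h (by positivity)
  calc a ^ 2 ≤ (s ^ γ * N) ^ 2 := pow_le_pow_left₀ ha ha' 2
    _ = N ^ 2 * (s ^ 2) ^ γ := by
      rw [mul_pow, ← Real.rpow_mul_natCast hs.le, ← Real.rpow_natCast_mul hs.le, mul_comm γ]
      ring

theorem inv_sq_le_of_lt {ρ₀ ρ : ℝ} (hρ₀ : 0 < ρ₀) (h : ρ₀ < ρ) :
    (ρ ^ 2)⁻¹ ≤ (1 + (ρ₀ ^ 2)⁻¹) / (1 + ρ ^ 2) := by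
  have hρ : 0 < ρ := hρ₀.trans h
  have hinv : (ρ ^ 2)⁻¹ ≤ (ρ₀ ^ 2)⁻¹ := inv_anti₀ (by positivity) (by gcongr)
  rw [le_div_iff₀ (by positivity), mul_add, mul_one, inv_mul_cancel₀ (by positivity)]
  linarith

theorem mul_sq_add_mul_sq_add_mul_sq_le {K₁ K₂ a b c : ℝ} (hK₁ : 0 ≤ K₁) (hK₂ : 0 ≤ K₂)
    (ha : 0 ≤ a) (hb : 0 ≤ b) (hc : 0 ≤ c) :
    K₁ * a ^ 2 + K₂ * b ^ 2 + K₂ * c ^ 2 ≤ (K₁ + K₂ + 1) * (a + b + c) ^ 2 := by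
  nlinarith [mul_nonneg ha hb, mul_nonneg ha hc, mul_nonneg hb hc,
    mul_nonneg hK₁ (sq_nonneg (b + c)), mul_nonneg hK₁ (mul_nonneg ha (add_nonneg hb hc)),
    mul_nonneg hK₂ (sq_nonneg a), mul_nonneg hK₂ (mul_nonneg ha (add_nonneg hb hc)),
    mul_nonneg hK₂ (mul_nonneg hb hc)]

theorem cylRho_sq (x : E3) : cylRho x ^ 2 = x 0 ^ 2 + x 1 ^ 2 :=
  Real.sq_sqrt (by positivity)

theorem norm_sq_eq_cylRho_sq_add (x : E3) : ‖x‖ ^ 2 = cylRho x ^ 2 + x 2 ^ 2 := by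
  rw [EuclideanSpace.norm_eq, Real.sq_sqrt (by positivity), cylRho_sq]
  simp [Fin.sum_univ_three, sq_abs, add_assoc]

theorem sigmaW_sq (x : E3) : sigmaW x ^ 2 = ‖x‖ ^ 2 + 1 := Real.sq_sqrt (by positivity)

theorem sigmaW_pos (x : E3) : 0 < sigmaW x := Real.sqrt_pos.mpr (by positivity)

theorem measurableSet_Omg (ρ₀ : ℝ) : MeasurableSet (Omg ρ₀) :=
  (isOpen_lt continuous_const (by unfold cylRho; fun_prop)).measurableSet

theorem norm_grad (f : E3 → ℝ) (x : E3) : ‖grad f x‖ = ‖fderiv ℝ f x‖ :=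
  (InnerProductSpace.toDual ℝ E3).symm.norm_map _

section C1Norm

variable {β : ℝ} {Ω : Set E3} {m dm : E3 → ℝ} {x : E3}

theorem c1Norm_nonneg (hm : ∀ x, 0 ≤ m x) (hdm : ∀ x, 0 ≤ dm x) : 0 ≤ c1Norm β Ω m dm :=
  Real.iSup_nonneg fun x => Real.iSup_nonneg fun _ =>
    add_nonneg (mul_nonneg (Real.rpow_nonneg (sigmaW_pos x).le _) (hm x))
      (mul_nonneg (Real.rpow_nonneg (sigmaW_pos x).le _) (hdm x))

theorem c1Expr_le_c1Norm (hfin : c1Fin β Ω m dm) (hx : x ∈ Ω) :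
    c1Expr β m dm x ≤ c1Norm β Ω m dm := by
  obtain ⟨b, hb⟩ := hfin
  have hbdd : BddAbove (Set.range fun y => ⨆ _ : y ∈ Ω, c1Expr β m dm y) := by
    refine ⟨max b 0, ?_⟩
    rintro _ ⟨y, rfl⟩
    exact Real.iSup_le (fun hy => le_max_of_le_left (hb ⟨y, hy, rfl⟩)) (le_max_right _ _)
  exact (ciSup_pos hx).symm.le.trans (le_ciSup hbdd x)

theorem c1Fin.sq_le (hfin : c1Fin β Ω m dm) (hx : x ∈ Ω) (hm : 0 ≤ m x) (hdm : 0 ≤ dm x) :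
    m x ^ 2 ≤ c1Norm β Ω m dm ^ 2 * (‖x‖ ^ 2 + 1) ^ β := by
  rw [← sigmaW_sq]
  refine sq_le_sq_mul_rpow_of_rpow_neg_mul_le (sigmaW_pos x) hm
    (le_trans ?_ (c1Expr_le_c1Norm hfin hx))
  exact le_add_of_nonneg_right (mul_nonneg (Real.rpow_nonneg (sigmaW_pos x).le _) hdm)

theorem c1Fin.grad_sq_le (hfin : c1Fin β Ω m dm) (hx : x ∈ Ω) (hm : 0 ≤ m x)
    (hdm : 0 ≤ dm x) : dm x ^ 2 ≤ c1Norm β Ω m dm ^ 2 * (‖x‖ ^ 2 + 1) ^ (β - 1) := by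
  rw [← sigmaW_sq]
  refine sq_le_sq_mul_rpow_of_rpow_neg_mul_le (sigmaW_pos x) hdm
    (le_trans ?_ (c1Expr_le_c1Norm hfin hx))
  rw [neg_sub, sub_eq_neg_add]
  exact le_add_of_nonneg_left (mul_nonneg (Real.rpow_nonneg (sigmaW_pos x).le _) hm)

end C1Norm

theorem c1Fin.sq_le_mul_norm_sq {β : ℝ} (hβ : β ≤ 1) {v : E3 → ℝ} (hv : Differentiable ℝ v)
    (hv0 : v 0 = 0) (hfin : c1Fin β Set.univ (fun x => |v x|) (fun x => ‖grad v x‖))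
    (x : E3) :
    v x ^ 2 ≤ c1Norm β Set.univ (fun x => |v x|) (fun x => ‖grad v x‖) ^ 2 * ‖x‖ ^ 2 := by
  set N := c1Norm β Set.univ (fun x => |v x|) (fun x => ‖grad v x‖)
  have hlip (y : E3) : ‖fderiv ℝ v y‖ ≤ |N| := by
    have hS : (‖y‖ ^ 2 + 1) ^ (β - 1) ≤ 1 :=
      Real.rpow_le_one_of_one_le_of_nonpos (by nlinarith [norm_nonneg y]) (by linarith)
    have h := sq_le_sq.mp ((hfin.grad_sq_le trivial (abs_nonneg _) (norm_nonneg _)).trans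
      (mul_le_of_le_one_right (sq_nonneg N) hS))
    rwa [← norm_grad, ← abs_norm]
  have h := Convex.norm_image_sub_le_of_norm_fderiv_le (fun z _ => hv z)
    (fun z _ => hlip z) convex_univ (Set.mem_univ 0) (Set.mem_univ x)
  simp only [hv0, sub_zero, Real.norm_eq_abs] at h
  simpa only [sq_abs, mul_pow] using pow_le_pow_left₀ (abs_nonneg _) h 2

theorem BNorm_nonneg (β ρ₀ : ℝ) (L0 : E3 → Mat2) (φ : Data) : 0 ≤ BNorm β ρ₀ L0 φ :=
  add_nonneg (add_nonneg (c1Norm_nonneg (fun _ => abs_nonneg _) (fun _ => norm_nonneg _))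
      (c1Norm_nonneg (fun _ => Real.sqrt_nonneg _) (fun _ => Real.sqrt_nonneg _)))
    (c1Norm_nonneg (fun _ => Real.sqrt_nonneg _) (fun _ => Real.sqrt_nonneg _))

theorem vecQuad_self_nonneg {A : Mat2} (hA : A.PosSemidef) (a : Fin 2 → ℝ) :
    0 ≤ vecQuad A a a := by
  have h := hA.dotProduct_mulVec_nonneg a
  simp only [star_trivial] at h
  refine h.trans_eq ?_
  simp only [vecQuad, dotProduct, Matrix.mulVec, Finset.mul_sum]
  exact Finset.sum_congr rfl fun i _ => Finset.sum_congr rfl fun j _ => by ring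

theorem quadG_eq_sum_vecQuad (A : Mat2) (Y : E3 → Fin 2 → ℝ) (x : E3) :
    quadG A Y Y x = ∑ k : Fin 3,
      vecQuad A (fun i => grad (fun y => Y y i) x k) (fun i => grad (fun y => Y y i) x k) := by
  simp only [quadG, vecQuad, PiLp.inner_apply, RCLike.inner_apply, conj_trivial, Finset.mul_sum]
  conv_rhs => rw [Finset.sum_comm]
  refine Finset.sum_congr rfl fun i _ => ?_
  conv_rhs => rw [Finset.sum_comm]
  exact Finset.sum_congr rfl fun j _ => Finset.sum_congr rfl fun k _ => by ring

theorem quadG_self_nonneg {A : Mat2} (hA : A.PosSemidef) (Y : E3 → Fin 2 → ℝ) (x : E3) :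
    0 ≤ quadG A Y Y x := by
  rw [quadG_eq_sum_vecQuad]
  exact Finset.sum_nonneg fun k _ => vecQuad_self_nonneg hA _

/-- Bounding `(1 + r²)^β / (1 + ρ²)` by `(1 + z²)^e₂ (1 + ρ²)^(2e₁)` needs `2e₁ = β - e₂ - 1`,
and `(1 + x₀²)(1 + x₁²) ≤ (1 + ρ²)²` splits the second factor; `e₂ = β/2 - 1/4` makes every
`2eᵢ < -1` as soon as `β < -1/2`. -/
def tailExponent (β : ℝ) : Fin 3 → ℝ := ![β / 4 - 3 / 8, β / 4 - 3 / 8, β / 2 - 1 / 4]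

def tailWeight (β : ℝ) (x : E3) : ℝ := ∏ i, (1 + x i ^ 2) ^ tailExponent β i

theorem tailWeight_nonneg (β : ℝ) (x : E3) : 0 ≤ tailWeight β x :=
  Finset.prod_nonneg fun _ _ => Real.rpow_nonneg (by positivity) _

theorem integrable_tailWeight {β : ℝ} (hβ : β < -1 / 2) : Integrable (tailWeight β) :=
  integrable_prod_one_add_sq_rpow fun i => by
    fin_cases i <;> simp [tailExponent] <;> linarith

theorem rpow_div_le_tailWeight {β : ℝ} (hβ : β ≤ -1 / 2) (x : E3) :
    (‖x‖ ^ 2 + 1) ^ β / (1 + cylRho x ^ 2) ≤ tailWeight β x := by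
  set e₁ := β / 4 - 3 / 8 with he₁
  set e₂ := β / 2 - 1 / 4 with he₂
  set S := ‖x‖ ^ 2 + 1
  set A := 1 + x 2 ^ 2
  set B := 1 + cylRho x ^ 2
  have hA : 0 < A := by positivity
  have hB : 0 < B := by positivity
  have hAS : A ≤ S := by
    simp only [A, S, norm_sq_eq_cylRho_sq_add]; nlinarith [sq_nonneg (cylRho x)]
  have hBS : B ≤ S := by
    simp only [B, S, norm_sq_eq_cylRho_sq_add]; nlinarith [sq_nonneg (x 2)]
  have hprod : (1 + x 0 ^ 2) * (1 + x 1 ^ 2) ≤ B ^ 2 := by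
    simp only [B, cylRho_sq]
    nlinarith [sq_nonneg (x 0 ^ 2 + x 1 ^ 2), sq_nonneg (x 0), sq_nonneg (x 1)]
  have hB_pow : B ^ (β - e₂) / B = (B ^ 2) ^ e₁ := by
    rw [div_eq_mul_inv, ← Real.rpow_neg_one, ← Real.rpow_add hB, ← Real.rpow_natCast,
      ← Real.rpow_mul hB.le]
    congr 1; simp only [e₁, e₂]; push_cast; ring
  calc S ^ β / B = S ^ e₂ * S ^ (β - e₂) / B := by
        rw [← Real.rpow_add (by positivity), add_sub_cancel]
    _ ≤ A ^ e₂ * B ^ (β - e₂) / B := by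
        gcongr ?_ / _
        exact mul_le_mul (Real.rpow_le_rpow_of_nonpos hA hAS (by linarith))
          (Real.rpow_le_rpow_of_nonpos hB hBS (by linarith)) (by positivity) (by positivity)
    _ = A ^ e₂ * (B ^ 2) ^ e₁ := by rw [mul_div_assoc, hB_pow]
    _ ≤ A ^ e₂ * ((1 + x 0 ^ 2) * (1 + x 1 ^ 2)) ^ e₁ :=
        mul_le_mul_of_nonneg_left
          (Real.rpow_le_rpow_of_nonpos (by positivity) hprod (by linarith)) (by positivity)
    _ = tailWeight β x := by
        rw [Real.mul_rpow (by positivity) (by positivity)]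
        simp [tailWeight, Fin.prod_univ_three, tailExponent, A, e₁, e₂]
        ring

def originWeight (β : ℝ) (x : E3) : ℝ :=
  2 * (ball (0 : E3) 1).indicator (fun y => (‖y‖ ^ 2)⁻¹) x + 3 * tailWeight β x

theorem originWeight_nonneg (β : ℝ) (x : E3) : 0 ≤ originWeight β x :=
  add_nonneg (mul_nonneg zero_le_two (Set.indicator_nonneg (fun _ _ => by positivity) _))
    (mul_nonneg zero_le_three (tailWeight_nonneg β x))

theorem integrable_originWeight {β : ℝ} (hβ : β < -1 / 2) : Integrable (originWeight β) := by
  have hnear : Integrable ((ball (0 : E3) 1).indicator fun y => (‖y‖ ^ 2)⁻¹) :=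
    (integrable_indicator_iff measurableSet_ball).mpr
      ((integrableOn_ball_inv_norm_pow_iff volume one_pos 2).mpr (by simp))
  exact (hnear.const_mul 2).add ((integrable_tailWeight hβ).const_mul 3)

theorem cylIntegrand_le_tailWeight {β ρ₀ N q₁ q₂ : ℝ} {x : E3} (hβ : β ≤ -1 / 2)
    (hρ₀ : 0 < ρ₀) (hx : x ∈ Omg ρ₀)
    (hq₁ : q₁ ≤ N ^ 2 * (‖x‖ ^ 2 + 1) ^ (β - 1)) (hq₂ : q₂ ≤ N ^ 2 * (‖x‖ ^ 2 + 1) ^ β) :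
    q₁ / cylRho x ^ 2 + q₂ / cylRho x ^ 4 ≤
      N ^ 2 * ((1 + (ρ₀ ^ 2)⁻¹) + (1 + (ρ₀ ^ 2)⁻¹) ^ 2) * tailWeight β x := by
  set k := 1 + (ρ₀ ^ 2)⁻¹
  set S := ‖x‖ ^ 2 + 1
  set B := 1 + cylRho x ^ 2
  have hS : 1 ≤ S := by simp only [S]; nlinarith [norm_nonneg x]
  have hB : 1 ≤ B := by simp only [B]; nlinarith [sq_nonneg (cylRho x)]
  have hw : (cylRho x ^ 2)⁻¹ ≤ k / B := inv_sq_le_of_lt hρ₀ hx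
  have hw0 : 0 ≤ (cylRho x ^ 2)⁻¹ := by positivity
  have hSβ : 0 ≤ N ^ 2 * S ^ β := by positivity
  have h₁ : q₁ ≤ N ^ 2 * S ^ β :=
    hq₁.trans (mul_le_mul_of_nonneg_left
      (Real.rpow_le_rpow_of_exponent_le hS (by linarith)) (sq_nonneg N))
  have hkB : (k / B) ^ 2 ≤ k ^ 2 / B := by
    rw [div_pow]
    exact div_le_div_of_nonneg_left (by positivity) (by positivity) (by nlinarith)
  calc q₁ / cylRho x ^ 2 + q₂ / cylRho x ^ 4
      = q₁ * (cylRho x ^ 2)⁻¹ + q₂ * ((cylRho x ^ 2)⁻¹) ^ 2 := by ring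
    _ ≤ N ^ 2 * S ^ β * (k / B) + N ^ 2 * S ^ β * (k ^ 2 / B) :=
      add_le_add (mul_le_mul h₁ hw hw0 hSβ)
        (mul_le_mul hq₂ ((pow_le_pow_left₀ hw0 hw 2).trans hkB) (by positivity) hSβ)
    _ = N ^ 2 * (k + k ^ 2) * (S ^ β / B) := by ring
    _ ≤ N ^ 2 * (k + k ^ 2) * tailWeight β x := by
      gcongr
      exact rpow_div_le_tailWeight hβ x

theorem h1Integrand_le_originWeight {β N g v : ℝ} {x : E3} (hβ : β ≤ -1 / 2)
    (hg : g ^ 2 ≤ N ^ 2 * (‖x‖ ^ 2 + 1) ^ (β - 1)) (hv : v ^ 2 ≤ N ^ 2 * (‖x‖ ^ 2 + 1) ^ β)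
    (hv₀ : v ^ 2 ≤ N ^ 2 * ‖x‖ ^ 2) :
    g ^ 2 / ‖x‖ ^ 2 + v ^ 2 / ‖x‖ ^ 4 ≤ N ^ 2 * originWeight β x := by
  set s := ‖x‖ ^ 2
  set S := s + 1
  have hs : 0 ≤ s := by positivity
  have hS : 0 < S := by positivity
  have hT := tailWeight_nonneg β x
  have hind : 0 ≤ (ball (0 : E3) 1).indicator (fun y => (‖y‖ ^ 2)⁻¹) x :=
    Set.indicator_nonneg (fun _ _ => by positivity) _
  rw [show ‖x‖ ^ 4 = s ^ 2 by ring, originWeight]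
  rcases lt_or_ge ‖x‖ 1 with hx | hx
  · have hSβ : S ^ (β - 1) ≤ 1 :=
      Real.rpow_le_one_of_one_le_of_nonpos (by linarith) (by linarith)
    have hg' : g ^ 2 / s ≤ N ^ 2 * s⁻¹ := by
      rw [div_eq_mul_inv]
      exact mul_le_mul_of_nonneg_right
        (hg.trans (mul_le_of_le_one_right (by positivity) hSβ)) (inv_nonneg.mpr hs)
    have hv' : v ^ 2 / s ^ 2 ≤ N ^ 2 * s⁻¹ := by
      calc v ^ 2 / s ^ 2 ≤ N ^ 2 * s / s ^ 2 := by gcongr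
        _ = N ^ 2 * s⁻¹ := by rcases hs.eq_or_lt with h | h <;> [simp [← h]; field_simp]
    rw [Set.indicator_of_mem (mem_ball_zero_iff.mpr hx)]
    nlinarith [inv_nonneg.mpr hs]
  · have hs1 : 1 ≤ s := by simp only [s]; nlinarith
    have hSβ : S ^ (β - 1) = S ^ β / S := by rw [Real.rpow_sub hS, Real.rpow_one]
    have hg' : g ^ 2 / s ≤ N ^ 2 * (S ^ β / S) := by
      rw [← hSβ]; exact (div_le_self (sq_nonneg g) hs1).trans hg
    have hv' : v ^ 2 / s ^ 2 ≤ 2 * (N ^ 2 * (S ^ β / S)) := by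
      calc v ^ 2 / s ^ 2 ≤ v ^ 2 / s :=
            div_le_div_of_nonneg_left (sq_nonneg v) (by linarith) (by nlinarith)
        _ ≤ N ^ 2 * S ^ β / s := by gcongr
        _ ≤ N ^ 2 * S ^ β / (S / 2) := by gcongr; linarith
        _ = 2 * (N ^ 2 * (S ^ β / S)) := by field_simp
    have hST : S ^ β / S ≤ tailWeight β x :=
      le_trans (div_le_div_of_nonneg_left (by positivity) (by positivity) (by
        simp only [S, s, norm_sq_eq_cylRho_sq_add]; nlinarith [sq_nonneg (x 2)]))
        (rpow_div_le_tailWeight hβ x)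
    nlinarith [mul_le_mul_of_nonneg_left hST (sq_nonneg N)]

theorem not_integrable_sq_div_norm_pow_four {v : E3 → ℝ} (hv : Continuous v) (h0 : v 0 ≠ 0) :
    ¬ Integrable (fun x => v x ^ 2 / ‖x‖ ^ 4) := by
  intro hint
  have hpos : 0 < v 0 ^ 2 := by positivity
  obtain ⟨δ, hδ, hball⟩ := Metric.eventually_nhds_iff_ball.mp
    (((hv.pow 2).tendsto 0).eventually_const_lt (by linarith : v 0 ^ 2 / 2 < v 0 ^ 2))
  have hnear : IntegrableOn (fun x : E3 => (‖x‖ ^ 4)⁻¹) (ball 0 δ) := by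
    refine ((hint.const_mul (2 / v 0 ^ 2)).integrableOn).mono'
      (Measurable.aestronglyMeasurable (by fun_prop)) ?_
    filter_upwards [ae_restrict_mem measurableSet_ball] with x hx
    rw [Real.norm_of_nonneg (by positivity)]
    calc (‖x‖ ^ 4)⁻¹ = 2 / v 0 ^ 2 * (v 0 ^ 2 / 2) / ‖x‖ ^ 4 := by field_simp
      _ ≤ 2 / v 0 ^ 2 * (v x ^ 2 / ‖x‖ ^ 4) := by
        rw [mul_div_assoc]; gcongr; exact (hball x hx).le
  have h := (integrableOn_ball_inv_norm_pow_iff volume hδ 4).mp hnear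
  rw [finrank_euclideanSpace_fin] at h
  omega

theorem exists_integral_h1Integrand_le {β : ℝ} (hβ : β < -1 / 2) :
    ∃ K, 0 ≤ K ∧ ∀ v : E3 → ℝ, Differentiable ℝ v →
      c1Fin β Set.univ (fun x => |v x|) (fun x => ‖grad v x‖) →
      ∫ x, (‖grad v x‖ ^ 2 / ‖x‖ ^ 2 + v x ^ 2 / ‖x‖ ^ 4) ≤
        K * c1Norm β Set.univ (fun x => |v x|) (fun x => ‖grad v x‖) ^ 2 := by
  refine ⟨∫ x, originWeight β x, integral_nonneg (originWeight_nonneg β),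
    fun v hv hfin => ?_⟩
  set N := c1Norm β Set.univ (fun x => |v x|) (fun x => ‖grad v x‖)
  by_cases hv0 : v 0 = 0
  · have hdom (x : E3) : ‖grad v x‖ ^ 2 / ‖x‖ ^ 2 + v x ^ 2 / ‖x‖ ^ 4 ≤ N ^ 2 * originWeight β x :=
      h1Integrand_le_originWeight hβ.le (hfin.grad_sq_le trivial (abs_nonneg _) (norm_nonneg _))
        (by simpa only [sq_abs] using hfin.sq_le trivial (abs_nonneg _) (norm_nonneg _))
        (hfin.sq_le_mul_norm_sq (by linarith) hv hv0 x)
    calc ∫ x, (‖grad v x‖ ^ 2 / ‖x‖ ^ 2 + v x ^ 2 / ‖x‖ ^ 4)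
        ≤ ∫ x, N ^ 2 * originWeight β x :=
          integral_mono_of_nonneg (ae_of_all _ fun x => by positivity)
            ((integrable_originWeight hβ).const_mul _) (ae_of_all _ hdom)
      _ = (∫ x, originWeight β x) * N ^ 2 := by rw [integral_const_mul]; ring
  · have hmeas : Measurable fun x => v x ^ 2 / ‖x‖ ^ 4 := by
      have := hv.continuous.measurable; fun_prop
    have hni : ¬ Integrable fun x => ‖grad v x‖ ^ 2 / ‖x‖ ^ 2 + v x ^ 2 / ‖x‖ ^ 4 := fun h =>
      not_integrable_sq_div_norm_pow_four hv.continuous hv0 <|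
        h.mono' hmeas.aestronglyMeasurable (ae_of_all _ fun x => by
          rw [Real.norm_of_nonneg (by positivity)]
          exact le_add_of_nonneg_left (by positivity))
    rw [integral_undef hni]
    exact mul_nonneg (integral_nonneg (originWeight_nonneg β)) (sq_nonneg N)

theorem exists_setIntegral_cylIntegrand_le {β ρ₀ : ℝ} (hβ : β < -1 / 2) (hρ₀ : 0 < ρ₀) :
    ∃ K, 0 ≤ K ∧ ∀ q₁ q₂ : E3 → ℝ, (∀ x, 0 ≤ q₁ x) → (∀ x, 0 ≤ q₂ x) →
      c1Fin β (Omg ρ₀) (fun x => √(q₂ x)) (fun x => √(q₁ x)) →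
      ∫ x in Omg ρ₀, (q₁ x / cylRho x ^ 2 + q₂ x / cylRho x ^ 4) ≤
        K * c1Norm β (Omg ρ₀) (fun x => √(q₂ x)) (fun x => √(q₁ x)) ^ 2 := by
  set k := 1 + (ρ₀ ^ 2)⁻¹
  have hT := integrable_tailWeight hβ
  refine ⟨(k + k ^ 2) * ∫ x, tailWeight β x,
    mul_nonneg (by positivity) (integral_nonneg (tailWeight_nonneg β)),
    fun q₁ q₂ hq₁ hq₂ hfin => ?_⟩
  set N := c1Norm β (Omg ρ₀) (fun x => √(q₂ x)) (fun x => √(q₁ x))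
  have hdom : ∀ x ∈ Omg ρ₀,
      q₁ x / cylRho x ^ 2 + q₂ x / cylRho x ^ 4 ≤ N ^ 2 * (k + k ^ 2) * tailWeight β x := by
    intro x hx
    have h₁ := hfin.grad_sq_le hx (Real.sqrt_nonneg _) (Real.sqrt_nonneg _)
    have h₂ := hfin.sq_le hx (Real.sqrt_nonneg _) (Real.sqrt_nonneg _)
    rw [Real.sq_sqrt (hq₁ x)] at h₁
    rw [Real.sq_sqrt (hq₂ x)] at h₂
    exact cylIntegrand_le_tailWeight hβ.le hρ₀ hx h₁ h₂
  have hdom0 (x : E3) : 0 ≤ N ^ 2 * (k + k ^ 2) * tailWeight β x :=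
    mul_nonneg (by positivity) (tailWeight_nonneg β x)
  calc ∫ x in Omg ρ₀, (q₁ x / cylRho x ^ 2 + q₂ x / cylRho x ^ 4)
      ≤ ∫ x in Omg ρ₀, N ^ 2 * (k + k ^ 2) * tailWeight β x :=
        integral_mono_of_nonneg (ae_of_all _ fun x =>
          add_nonneg (div_nonneg (hq₁ x) (by positivity)) (div_nonneg (hq₂ x) (by positivity)))
          (hT.const_mul _).integrableOn ((ae_restrict_mem (measurableSet_Omg ρ₀)).mono hdom)
    _ ≤ ∫ x, N ^ 2 * (k + k ^ 2) * tailWeight β x :=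
        setIntegral_le_integral (hT.const_mul _) (ae_of_all _ hdom0)
    _ = (k + k ^ 2) * (∫ x, tailWeight β x) * N ^ 2 := by rw [integral_const_mul]; ring

/-- the continuous embedding B ⊂ H: for every β < −1 and ρ₀ > 0
there is c > 0 (depending only on β, ρ₀) with ‖φ‖_H ≤ c ‖φ‖_B for every
perturbation φ with finite B-norm. -/
theorem B_embeds_in_H (β ρ₀ : ℝ) (hβ : β < -1) (hρ₀ : 0 < ρ₀) :
    ∃ c > 0, ∀ L0 : E3 → Mat2, (∀ x, (L0 x).IsSymm) → (∀ x, (L0 x).PosDef) →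
      ∀ φ : Data, SmoothData φ → AxisymData φ →
        (∀ x, cylRho x ≤ ρ₀ → φ.L x = 0 ∧ φ.Y x = 0) →
        FiniteB β ρ₀ L0 φ →
        Real.sqrt (HNormSq ρ₀ L0 φ) ≤ c * BNorm β ρ₀ L0 φ := by
  obtain ⟨K₁, hK₁, hv⟩ := exists_integral_h1Integrand_le (β := β) (by linarith)
  obtain ⟨K₂, hK₂, hcyl⟩ := exists_setIntegral_cylIntegrand_le (β := β) (by linarith) hρ₀
  refine ⟨√(K₁ + K₂ + 1), by positivity, fun L0 _ hL0 φ hφ _ _ hfin => ?_⟩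
  obtain ⟨hfin₁, hfin₂, hfin₃⟩ := hfin
  have hpsd (x : E3) : ((L0 x)⁻¹).PosSemidef := (hL0 x).inv.posSemidef
  have h₁ := hv φ.v (hφ.1.differentiable (by simp)) hfin₁
  have h₂ := hcyl (fun x => gradMatAbsSq φ.L x) (fun x => matAbsSq (φ.L x))
    (fun x => by unfold gradMatAbsSq; positivity) (fun x => by unfold matAbsSq; positivity) hfin₂
  have h₃ := hcyl (fun x => quadG (L0 x)⁻¹ φ.Y φ.Y x) (fun x => vecQuad (L0 x)⁻¹ (φ.Y x) (φ.Y x))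
    (fun x => quadG_self_nonneg (hpsd x) _ _) (fun x => vecQuad_self_nonneg (hpsd x) _) hfin₃
  have hH : HNormSq ρ₀ L0 φ ≤ (K₁ + K₂ + 1) * BNorm β ρ₀ L0 φ ^ 2 :=
    (add_le_add (add_le_add h₁ h₂) h₃).trans <| mul_sq_add_mul_sq_add_mul_sq_le hK₁ hK₂
      (c1Norm_nonneg (fun _ => abs_nonneg _) (fun _ => norm_nonneg _))
      (c1Norm_nonneg (fun _ => Real.sqrt_nonneg _) (fun _ => Real.sqrt_nonneg _))
      (c1Norm_nonneg (fun _ => Real.sqrt_nonneg _) (fun _ => Real.sqrt_nonneg _))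
  calc √(HNormSq ρ₀ L0 φ) ≤ √((K₁ + K₂ + 1) * BNorm β ρ₀ L0 φ ^ 2) := Real.sqrt_le_sqrt hH
    _ = √(K₁ + K₂ + 1) * BNorm β ρ₀ L0 φ := by
      rw [Real.sqrt_mul (by positivity), Real.sqrt_sq (BNorm_nonneg β ρ₀ L0 φ)]

end BHMass
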